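/- arXiv:1205.4340 — 2 statements merged into one kernel-verified Lean document; each statement's English description precedes it below -/
import Mathlib

section
/- Gauss' identity: ∑_{j=0}^{∞} (-1)^j q^{j(2j+1)} (1 - q^{2j+1}) = (q²;q²)_∞ / (-q;q²)_∞ for |q| < 1 (equivalently as formal power series). -/
/-!
Expand `∏_{k<2N} ((q⁴)^N - q³ q^{4k})` by the q-binomial theorem in base `q⁴`. Up to the
monomial `(-1)^N q^{N(6N+1)}` the product is `(q;q²)_{2N}`, and the expansion becomes a finite
Gauss identity whose `i`-th term carries the coefficients `[2N, N+i]` and `[2N, N+i+1]` in base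
`q⁴`. For `|q| < 1` these coefficients are uniformly bounded and tend to `1/(q⁴;q⁴)_∞`, so
Tannery's theorem gives `∑ (-1)^j q^{j(2j+1)} (1 - q^{2j+1}) = (q⁴;q⁴)_∞ (q;q²)_∞`. Finally
`(q;q²)_∞ (-q;q²)_∞ = (q²;q⁴)_∞` and `(q²;q⁴)_∞ (q⁴;q⁴)_∞ = (q²;q²)_∞`.
-/

/-- infinite q-Pochhammer symbol `(a;q)_∞` -/
noncomputable def qPochInf (a q : ℂ) : ℂ := ∏' n : ℕ, (1 - a * q ^ n)

open Finset Filter Topology Polynomial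

section QBinomial

variable {R S : Type*} [CommRing R] [CommRing S]

def qPoch (a q : R) (n : ℕ) : R := ∏ k ∈ range n, (1 - a * q ^ k)

lemma qPoch_zero (a q : R) : qPoch a q 0 = 1 := rfl

lemma qPoch_succ (a q : R) (n : ℕ) : qPoch a q (n + 1) = qPoch a q n * (1 - a * q ^ n) :=
  prod_range_succ _ n

def qBinom (Q : R) : ℕ → ℕ → R
  | _, 0 => 1
  | 0, _ + 1 => 0
  | m + 1, j + 1 => Q ^ (j + 1) * qBinom Q m (j + 1) + qBinom Q m j

@[simp] lemma qBinom_zero_right (Q : R) (m : ℕ) : qBinom Q m 0 = 1 := by cases m <;> rfl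

lemma qBinom_succ_succ (Q : R) (m j : ℕ) :
    qBinom Q (m + 1) (j + 1) = Q ^ (j + 1) * qBinom Q m (j + 1) + qBinom Q m j := rfl

lemma qBinom_eq_zero_of_lt (Q : R) {m j : ℕ} (h : m < j) : qBinom Q m j = 0 := by
  induction m generalizing j with
  | zero => obtain ⟨j, rfl⟩ := Nat.exists_eq_succ_of_ne_zero h.ne'; rfl
  | succ m ih =>
    obtain ⟨j, rfl⟩ := Nat.exists_eq_succ_of_ne_zero (Nat.ne_zero_of_lt h)
    rw [qBinom_succ_succ, ih (by omega), ih (by omega), mul_zero, zero_add]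

lemma map_qBinom {F : Type*} [FunLike F R S] [RingHomClass F R S] (f : F) (Q : R) (m j : ℕ) :
    f (qBinom Q m j) = qBinom (f Q) m j := by
  induction m generalizing j with
  | zero => cases j <;> simp [qBinom]
  | succ m ih => cases j <;> simp [qBinom_succ_succ, ih]

lemma qBinom_self (Q : R) (m : ℕ) : qBinom Q m m = 1 := by
  induction m with
  | zero => rfl
  | succ m ih =>
    rw [qBinom_succ_succ, ih, qBinom_eq_zero_of_lt Q m.lt_succ_self, mul_zero, zero_add]

lemma qBinom_mul_qPoch (Q : R) (j r : ℕ) :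
    qBinom Q (j + r) j * (qPoch Q Q j * qPoch Q Q r) = qPoch Q Q (j + r) := by
  induction j generalizing r with
  | zero => simp [qPoch_zero]
  | succ j ihj =>
    induction r with
    | zero => simp [qBinom_self, qPoch_zero]
    | succ r ihr =>
      have hB := ihj (r + 1)
      rw [show j + (r + 1) = j + 1 + r by omega] at hB
      rw [show j + 1 + (r + 1) = j + 1 + r + 1 from rfl, qBinom_succ_succ,
        qPoch_succ Q Q (j + 1 + r)]
      simp only [qPoch_succ Q Q j, qPoch_succ Q Q r] at ihr hB ⊢
      linear_combination Q ^ (j + 1) * (1 - Q * Q ^ r) * ihr + (1 - Q * Q ^ j) * hB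

lemma qPoch_X_ne_zero (n : ℕ) : qPoch (X : ℤ[X]) X n ≠ 0 :=
  prod_ne_zero_iff.2 fun k _ h => by simpa using congrArg (eval 0) h

/-- Proved for the generic element `X` of `ℤ[X]`, where the q-factorials can be cancelled, and
then specialised. -/
lemma qBinom_symm (Q : R) (j r : ℕ) : qBinom Q (j + r) j = qBinom Q (j + r) r := by
  have key : qBinom (X : ℤ[X]) (j + r) j = qBinom X (j + r) r := by
    refine mul_right_cancel₀ (mul_ne_zero (qPoch_X_ne_zero j) (qPoch_X_ne_zero r)) ?_
    rw [qBinom_mul_qPoch, mul_comm (qPoch X X j), add_comm j r, qBinom_mul_qPoch]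
  simpa [map_qBinom] using congrArg (aeval Q) key

theorem prod_add_mul_pow_eq_sum_qBinom (Q x y : R) (m : ℕ) :
    ∏ k ∈ range m, (x + y * Q ^ k) =
      ∑ j ∈ range (m + 1), Q ^ j.choose 2 * qBinom Q m j * x ^ (m - j) * y ^ j := by
  induction m generalizing y with
  | zero => simp
  | succ m ih =>
    set b : ℕ → R := fun j => Q ^ j.choose 2 * qBinom Q m j * x ^ (m - j) * (y * Q) ^ j
    have hb : b (m + 1) = 0 := by simp [b, qBinom_eq_zero_of_lt Q m.lt_succ_self]
    have hstep : ∀ j, Q ^ (j + 1).choose 2 * qBinom Q (m + 1) (j + 1) * x ^ (m + 1 - (j + 1)) *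
        y ^ (j + 1) = x * b (j + 1) + y * b j := by
      intro j
      rcases lt_or_ge j m with hj | hj
      · obtain ⟨t, rfl⟩ := Nat.exists_eq_add_of_lt hj
        simp only [b, qBinom_succ_succ, Nat.choose_succ_succ', Nat.choose_one_right,
          show j + t + 1 + 1 - (j + 1) = t + 1 by omega, show j + t + 1 - (j + 1) = t by omega,
          show j + t + 1 - j = t + 1 by omega]
        ring
      · simp only [b, qBinom_succ_succ, Nat.choose_succ_succ', Nat.choose_one_right,
          qBinom_eq_zero_of_lt Q (show m < j + 1 by omega), show m + 1 - (j + 1) = m - j by omega]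
        ring
    calc ∏ k ∈ range (m + 1), (x + y * Q ^ k)
        = (∑ j ∈ range (m + 1), b j) * (x + y) := by
          rw [prod_range_succ', ← ih]
          simp [pow_succ', mul_assoc]
      _ = ∑ j ∈ range (m + 1), (x * b (j + 1) + y * b j) + x * b 0 := by
          have hshift :
              ∑ j ∈ range (m + 1), b (j + 1) + b 0 = ∑ j ∈ range (m + 1), b j := by
            rw [← sum_range_succ', sum_range_succ, hb, add_zero]
          rw [sum_add_distrib, ← mul_sum, ← mul_sum, ← hshift]
          ring
      _ = _ := by
          rw [sum_range_succ' _ (m + 1)]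
          simp only [hstep]
          simp [b, pow_succ']

end QBinomial

section FiniteGauss

variable {R : Type*} [CommRing R]

lemma qPoch_two_mul (a q : R) (n : ℕ) :
    qPoch a q (2 * n) = qPoch a (q ^ 2) n * qPoch (a * q) (q ^ 2) n := by
  induction n with
  | zero => simp [qPoch_zero]
  | succ n ih =>
    rw [show 2 * (n + 1) = 2 * n + 1 + 1 by ring, qPoch_succ, qPoch_succ, ih, qPoch_succ,
      qPoch_succ]
    ring

lemma prod_range_two_mul_eq_mul_qPoch (q : R) (N : ℕ) :
    ∏ k ∈ range (2 * N), ((q ^ 4) ^ N + -q ^ 3 * (q ^ 4) ^ k) =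
      (-1) ^ N * q ^ (N * (6 * N + 1)) * qPoch q (q ^ 2) (2 * N) := by
  have hlow : ∏ k ∈ range N, ((q ^ 4) ^ N + -q ^ 3 * (q ^ 4) ^ k) =
      (-q ^ 3) ^ N * (q ^ 4) ^ N.choose 2 * qPoch q (q ^ 4) N := by
    have hfac : ∀ k ∈ range N, (q ^ 4) ^ N + -q ^ 3 * (q ^ 4) ^ k =
        -q ^ 3 * (q ^ 4) ^ k * (1 - q * (q ^ 4) ^ (N - 1 - k)) := by
      intro k hk
      obtain ⟨t, rfl⟩ := Nat.exists_eq_add_of_lt (mem_range.1 hk)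
      rw [show k + t + 1 - 1 - k = t by omega]
      ring
    rw [prod_congr rfl hfac, prod_mul_distrib, prod_mul_distrib, prod_const, card_range,
      prod_pow_eq_pow_sum, sum_range_id, ← Nat.choose_two_right, qPoch,
      ← prod_range_reflect (fun k => 1 - q * (q ^ 4) ^ k)]
  have hhigh : ∏ k ∈ range N, ((q ^ 4) ^ N + -q ^ 3 * (q ^ 4) ^ (N + k)) =
      ((q ^ 4) ^ N) ^ N * qPoch (q ^ 3) (q ^ 4) N := by
    rw [prod_congr rfl fun k _ => show (q ^ 4) ^ N + -q ^ 3 * (q ^ 4) ^ (N + k) =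
      (q ^ 4) ^ N * (1 - q ^ 3 * (q ^ 4) ^ k) by ring, prod_mul_distrib, prod_const, card_range,
      qPoch]
  have hexp : 3 * N + 4 * N.choose 2 + 4 * N * N = N * (6 * N + 1) := by
    qify; rw [Nat.cast_choose_two]; ring
  calc ∏ k ∈ range (2 * N), ((q ^ 4) ^ N + -q ^ 3 * (q ^ 4) ^ k)
      = (-1) ^ N * q ^ (3 * N + 4 * N.choose 2 + 4 * N * N) *
          (qPoch q (q ^ 4) N * qPoch (q ^ 3) (q ^ 4) N) := by
        rw [two_mul, prod_range_add, hlow, hhigh]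
        ring
    _ = _ := by
        rw [hexp, qPoch_two_mul]
        ring_nf

def gaussTerm (q : R) (N i : ℕ) : R :=
  (-1) ^ i * q ^ (i * (2 * i + 1)) *
    (qBinom (q ^ 4) (2 * N) (N + i) - q ^ (2 * i + 1) * qBinom (q ^ 4) (2 * N) (N + i + 1))

lemma qBinom_expansion_term_add (q : R) {N i : ℕ} (hi : i ≤ N) :
    (q ^ 4) ^ (N + i).choose 2 * qBinom (q ^ 4) (2 * N) (N + i) *
        ((q ^ 4) ^ N) ^ (2 * N - (N + i)) * (-q ^ 3) ^ (N + i) =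
      (-1) ^ N * q ^ (N * (6 * N + 1)) *
        ((-1) ^ i * q ^ (i * (2 * i + 1)) * qBinom (q ^ 4) (2 * N) (N + i)) := by
  obtain ⟨s, rfl⟩ := Nat.exists_eq_add_of_le hi
  have hexp : 4 * (i + s + i).choose 2 + 4 * (i + s) * s + 3 * (i + s + i) =
      (i + s) * (6 * (i + s) + 1) + i * (2 * i + 1) := by
    qify; rw [Nat.cast_choose_two]; push_cast; ring
  rw [show 2 * (i + s) - (i + s + i) = s by omega]
  calc _ = (-1) ^ (i + s + i) *
        q ^ (4 * (i + s + i).choose 2 + 4 * (i + s) * s + 3 * (i + s + i)) *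
          qBinom (q ^ 4) (2 * (i + s)) (i + s + i) := by ring
    _ = _ := by rw [hexp]; ring

lemma qBinom_expansion_term_sub (q : R) {N i : ℕ} (hi : i < N) :
    (q ^ 4) ^ (N - 1 - i).choose 2 * qBinom (q ^ 4) (2 * N) (N - 1 - i) *
        ((q ^ 4) ^ N) ^ (2 * N - (N - 1 - i)) * (-q ^ 3) ^ (N - 1 - i) =
      -((-1) ^ N * q ^ (N * (6 * N + 1)) * ((-1) ^ i * q ^ (i * (2 * i + 1)) *
        (q ^ (2 * i + 1) * qBinom (q ^ 4) (2 * N) (N + i + 1)))) := by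
  obtain ⟨s, rfl⟩ := Nat.exists_eq_add_of_lt hi
  have hexp : 4 * s.choose 2 + 4 * (i + s + 1) * (2 * i + 2 + s) + 3 * s =
      (i + s + 1) * (6 * (i + s + 1) + 1) + i * (2 * i + 1) + (2 * i + 1) := by
    qify; rw [Nat.cast_choose_two]; ring
  have hsign : (-1 : R) ^ s = -((-1) ^ (i + s + 1) * (-1) ^ i) := by
    rw [← pow_add, show i + s + 1 + i = s + 1 + 2 * i by ring, pow_add, pow_add, pow_mul]
    simp
  have hsymm : qBinom (q ^ 4) (2 * (i + s + 1)) s =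
      qBinom (q ^ 4) (2 * (i + s + 1)) (i + s + 1 + i + 1) := by
    rw [show 2 * (i + s + 1) = s + (i + s + 1 + i + 1) by ring]
    exact qBinom_symm _ _ _
  rw [show i + s + 1 - 1 - i = s by omega, show 2 * (i + s + 1) - s = 2 * i + 2 + s by omega]
  calc _ = (-1) ^ s * q ^ (4 * s.choose 2 + 4 * (i + s + 1) * (2 * i + 2 + s) + 3 * s) *
        qBinom (q ^ 4) (2 * (i + s + 1)) s := by ring
    _ = _ := by rw [hexp, hsign, hsymm]; ring

lemma sum_range_qBinom_eq_mul_sum_gaussTerm (q : R) (N : ℕ) :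
    ∑ j ∈ range (2 * N + 1), (q ^ 4) ^ j.choose 2 * qBinom (q ^ 4) (2 * N) j *
        ((q ^ 4) ^ N) ^ (2 * N - j) * (-q ^ 3) ^ j =
      (-1) ^ N * q ^ (N * (6 * N + 1)) * ∑ i ∈ range (N + 1), gaussTerm q N i := by
  have hlast : q ^ (2 * N + 1) * qBinom (q ^ 4) (2 * N) (N + N + 1) = 0 := by
    rw [qBinom_eq_zero_of_lt _ (by omega), mul_zero]
  rw [show 2 * N + 1 = N + (N + 1) by ring, sum_range_add, ← sum_range_reflect _ N,
    sum_congr rfl fun i hi => qBinom_expansion_term_sub q (mem_range.1 hi),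
    sum_congr rfl fun i hi => qBinom_expansion_term_add q (Nat.lt_succ_iff.1 (mem_range.1 hi))]
  simp only [gaussTerm, mul_sub, sum_sub_distrib, sum_neg_distrib, ← mul_sum,
    sum_range_succ _ N, hlast]
  ring

lemma gaussTerm_eq_zero_of_lt (q : R) {N i : ℕ} (h : N < i) : gaussTerm q N i = 0 := by
  simp [gaussTerm, qBinom_eq_zero_of_lt _ (show 2 * N < N + i by omega),
    qBinom_eq_zero_of_lt _ (show 2 * N < N + i + 1 by omega)]

theorem qPoch_two_mul_eq_sum_gaussTerm (q : R) (N : ℕ) :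
    qPoch q (q ^ 2) (2 * N) = ∑ i ∈ range (N + 1), gaussTerm q N i := by
  have key : qPoch (X : ℤ[X]) (X ^ 2) (2 * N) = ∑ i ∈ range (N + 1), gaussTerm X N i := by
    have hc : (-1 : ℤ[X]) ^ N * X ^ (N * (6 * N + 1)) ≠ 0 := by simp [X_ne_zero]
    refine mul_left_cancel₀ hc ?_
    rw [← prod_range_two_mul_eq_mul_qPoch, prod_add_mul_pow_eq_sum_qBinom,
      sum_range_qBinom_eq_mul_sum_gaussTerm]
  simpa [qPoch, gaussTerm, map_qBinom] using congrArg (aeval q) key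

end FiniteGauss

lemma qBinom_eq_div {K : Type*} [Field K] {Q : K} {j r : ℕ} (hj : qPoch Q Q j ≠ 0)
    (hr : qPoch Q Q r ≠ 0) :
    qBinom Q (j + r) j = qPoch Q Q (j + r) / (qPoch Q Q j * qPoch Q Q r) :=
  eq_div_of_mul_eq (mul_ne_zero hj hr) (qBinom_mul_qPoch Q j r)

section Complex

variable {a q : ℂ}

lemma norm_pow_lt_one (hq : ‖q‖ < 1) {n : ℕ} (hn : n ≠ 0) : ‖q ^ n‖ < 1 := by
  rw [norm_pow]; exact pow_lt_one₀ (norm_nonneg q) hq hn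

lemma multipliable_one_sub_mul_pow (a : ℂ) (hq : ‖q‖ < 1) :
    Multipliable fun n : ℕ => 1 - a * q ^ n := by
  simpa [sub_eq_add_neg] using Complex.multipliable_one_add_of_summable
    ((summable_geometric_of_norm_lt_one hq).mul_left a).neg

lemma tendsto_qPoch (a : ℂ) (hq : ‖q‖ < 1) :
    Tendsto (qPoch a q) atTop (𝓝 (qPochInf a q)) :=
  (multipliable_one_sub_mul_pow a hq).tendsto_prod_tprod_nat

lemma one_sub_mul_pow_ne_zero (ha : ‖a‖ < 1) (hq : ‖q‖ ≤ 1) (n : ℕ) :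
    1 - a * q ^ n ≠ 0 := by
  refine sub_ne_zero.2 fun h => ?_
  have : ‖a * q ^ n‖ < 1 := by
    rw [norm_mul, norm_pow]
    exact (mul_le_of_le_one_right (norm_nonneg a) (pow_le_one₀ (norm_nonneg q) hq)).trans_lt ha
  simp [← h] at this

lemma qPoch_ne_zero (ha : ‖a‖ < 1) (hq : ‖q‖ ≤ 1) (n : ℕ) : qPoch a q n ≠ 0 :=
  prod_ne_zero_iff.2 fun k _ => one_sub_mul_pow_ne_zero ha hq k

lemma qPochInf_ne_zero (ha : ‖a‖ < 1) (hq : ‖q‖ < 1) : qPochInf a q ≠ 0 := by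
  simpa [qPochInf, sub_eq_add_neg] using tprod_one_add_ne_zero_of_summable
    (f := fun n => -(a * q ^ n))
    (fun n => by simpa [sub_eq_add_neg] using one_sub_mul_pow_ne_zero ha hq.le n)
    (by simpa using (summable_geometric_of_lt_one (norm_nonneg q) hq).mul_left ‖a‖)

lemma qPochInf_mul_qPochInf_neg (a : ℂ) (hq : ‖q‖ < 1) :
    qPochInf a q * qPochInf (-a) q = qPochInf (a ^ 2) (q ^ 2) := by
  rw [qPochInf, qPochInf, ← (multipliable_one_sub_mul_pow a hq).tprod_mul
    (multipliable_one_sub_mul_pow (-a) hq)]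
  exact tprod_congr fun n => by ring

lemma qPochInf_even_mul_odd (a : ℂ) (hq : ‖q‖ < 1) :
    qPochInf a (q ^ 2) * qPochInf (a * q) (q ^ 2) = qPochInf a q := by
  have hq2 := norm_pow_lt_one hq two_ne_zero
  have heven : (fun k => 1 - a * q ^ (2 * k)) = fun k => 1 - a * (q ^ 2) ^ k := by
    simp [pow_mul]
  have hodd : (fun k => 1 - a * q ^ (2 * k + 1)) = fun k => 1 - a * q * (q ^ 2) ^ k := by
    ext k; ring
  have := tprod_even_mul_odd (f := fun n => 1 - a * q ^ n)
    (heven ▸ multipliable_one_sub_mul_pow a hq2)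
    (hodd ▸ multipliable_one_sub_mul_pow (a * q) hq2)
  rwa [heven, hodd] at this

lemma tendsto_qBinom (hq : ‖q‖ < 1) {u v : ℕ → ℕ} (hu : Tendsto u atTop atTop)
    (hv : Tendsto v atTop atTop) :
    Tendsto (fun n => qBinom q (u n + v n) (u n)) atTop (𝓝 (qPochInf q q)⁻¹) := by
  have hL := qPochInf_ne_zero hq hq
  have huv : Tendsto (fun n => u n + v n) atTop atTop :=
    tendsto_atTop_mono (fun n => Nat.le_add_right _ _) hu
  have hlim := ((tendsto_qPoch q hq).comp huv).div
    (((tendsto_qPoch q hq).comp hu).mul ((tendsto_qPoch q hq).comp hv)) (mul_ne_zero hL hL)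
  rw [div_mul_cancel_left₀ hL] at hlim
  exact hlim.congr fun n =>
    (qBinom_eq_div (qPoch_ne_zero hq hq.le _) (qPoch_ne_zero hq hq.le _)).symm

lemma exists_norm_qBinom_le (hq : ‖q‖ < 1) : ∃ B, ∀ m j, ‖qBinom q m j‖ ≤ B := by
  obtain ⟨C, hC⟩ := isBounded_iff_forall_norm_le.1
    (Metric.isBounded_range_of_tendsto _ (tendsto_qPoch q hq))
  obtain ⟨D, hD⟩ := isBounded_iff_forall_norm_le.1 (Metric.isBounded_range_of_tendsto _
    ((tendsto_qPoch q hq).inv₀ (qPochInf_ne_zero hq hq)))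
  have hC0 : 0 ≤ C := (norm_nonneg _).trans (hC _ ⟨0, rfl⟩)
  have hD0 : 0 ≤ D := (norm_nonneg _).trans (hD _ ⟨0, rfl⟩)
  refine ⟨C * (D * D), fun m j => ?_⟩
  rcases le_or_gt j m with hjm | hjm
  · obtain ⟨r, rfl⟩ := Nat.exists_eq_add_of_le hjm
    rw [qBinom_eq_div (qPoch_ne_zero hq hq.le _) (qPoch_ne_zero hq hq.le _), div_eq_mul_inv,
      mul_inv, norm_mul, norm_mul]
    exact mul_le_mul (hC _ ⟨_, rfl⟩) (mul_le_mul (hD _ ⟨j, rfl⟩) (hD _ ⟨r, rfl⟩)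
      (norm_nonneg _) hD0) (by positivity) hC0
  · rw [qBinom_eq_zero_of_lt q hjm, norm_zero]
    positivity

lemma tendsto_qBinom_two_mul (hq : ‖q‖ < 1) (k : ℕ) :
    Tendsto (fun N => qBinom q (2 * N) (N + k)) atTop (𝓝 (qPochInf q q)⁻¹) := by
  refine (tendsto_qBinom hq (tendsto_add_atTop_nat k) (tendsto_sub_atTop_nat k)).congr' ?_
  filter_upwards [eventually_ge_atTop k] with N hN
  rw [show N + k + (N - k) = 2 * N by omega]

lemma tendsto_gaussTerm (hq : ‖q‖ < 1) (i : ℕ) :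
    Tendsto (fun N => gaussTerm q N i) atTop
      (𝓝 ((-1) ^ i * q ^ (i * (2 * i + 1)) * (1 - q ^ (2 * i + 1)) *
        (qPochInf (q ^ 4) (q ^ 4))⁻¹)) := by
  have hq4 := norm_pow_lt_one hq four_ne_zero
  have hlim := ((tendsto_qBinom_two_mul hq4 i).sub
    ((tendsto_qBinom_two_mul hq4 (i + 1)).const_mul (q ^ (2 * i + 1)))).const_mul
    ((-1) ^ i * q ^ (i * (2 * i + 1)))
  convert hlim using 2
  · rfl
  · ring

lemma norm_gaussTerm_le (hq : ‖q‖ < 1) {B : ℝ} (hB : ∀ m j, ‖qBinom (q ^ 4) m j‖ ≤ B)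
    (N i : ℕ) :
    ‖gaussTerm q N i‖ ≤ 2 * B * ‖q‖ ^ i := by
  have hpow : ∀ e, i ≤ e → ‖q ^ e‖ ≤ ‖q‖ ^ i := fun e he => by
    rw [norm_pow]; exact pow_le_pow_of_le_one (norm_nonneg q) hq.le he
  have hdiff : ‖qBinom (q ^ 4) (2 * N) (N + i) -
      q ^ (2 * i + 1) * qBinom (q ^ 4) (2 * N) (N + i + 1)‖ ≤ 2 * B := by
    refine (norm_sub_le _ _).trans ?_
    rw [norm_mul]
    have h1 : ‖q ^ (2 * i + 1)‖ ≤ 1 := (norm_pow_lt_one hq (by omega)).le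
    nlinarith [hB (2 * N) (N + i), hB (2 * N) (N + i + 1), norm_nonneg (q ^ (2 * i + 1)),
      norm_nonneg (qBinom (q ^ 4) (2 * N) (N + i + 1))]
  rw [gaussTerm, norm_mul, norm_mul, norm_pow, norm_neg, norm_one, one_pow, one_mul, mul_comm]
  exact mul_le_mul hdiff (hpow _ (Nat.le_mul_of_pos_right i (by omega))) (norm_nonneg _)
    ((norm_nonneg _).trans hdiff)

theorem tsum_gauss_eq_mul_qPochInf (hq : ‖q‖ < 1) :
    ∑' i : ℕ, (-1) ^ i * q ^ (i * (2 * i + 1)) * (1 - q ^ (2 * i + 1)) =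
      qPochInf (q ^ 4) (q ^ 4) * qPochInf q (q ^ 2) := by
  have hq2 := norm_pow_lt_one hq two_ne_zero
  have hq4 := norm_pow_lt_one hq four_ne_zero
  obtain ⟨B, hB⟩ := exists_norm_qBinom_le hq4
  have hsum : Tendsto (fun N => ∑' i, gaussTerm q N i) atTop
      (𝓝 (∑' i : ℕ, (-1) ^ i * q ^ (i * (2 * i + 1)) * (1 - q ^ (2 * i + 1)) *
        (qPochInf (q ^ 4) (q ^ 4))⁻¹)) :=
    tendsto_tsum_of_dominated_convergence
      ((summable_geometric_of_lt_one (norm_nonneg q) hq).mul_left (2 * B))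
      (tendsto_gaussTerm hq) (Eventually.of_forall (norm_gaussTerm_le hq hB))
  have hprod : Tendsto (fun N => ∑' i, gaussTerm q N i) atTop (𝓝 (qPochInf q (q ^ 2))) := by
    refine ((tendsto_qPoch q hq2).comp (tendsto_id.const_mul_atTop' two_pos)).congr fun N => ?_
    rw [tsum_eq_sum (s := range (N + 1)) fun i hi =>
      gaussTerm_eq_zero_of_lt q (by simpa using hi)]
    exact qPoch_two_mul_eq_sum_gaussTerm q N
  rw [← tendsto_nhds_unique hsum hprod, tsum_mul_right]
  field_simp [qPochInf_ne_zero hq4 hq4]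

end Complex

theorem gauss_triangular_identity (q : ℂ) (hq : ‖q‖ < 1) :
    (∑' j : ℕ, (-1 : ℂ) ^ j * q ^ (j * (2 * j + 1)) * (1 - q ^ (2 * j + 1))) =
    qPochInf (q ^ 2) (q ^ 2) / qPochInf (-q) (q ^ 2) := by
  have hq2 := norm_pow_lt_one hq two_ne_zero
  rw [eq_div_iff (qPochInf_ne_zero (by rwa [norm_neg]) hq2), tsum_gauss_eq_mul_qPochInf hq,
    mul_assoc, qPochInf_mul_qPochInf_neg q hq2, ← qPochInf_even_mul_odd (q ^ 2) hq2]
  ring_nf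
end

section
/- For all n ≥ 1, p̄(n) - 2p̄(n-1) + 2p̄(n-4) ≥ 0, where p̄(m) = 0 for m < 0. -/
/-- number of (unrestricted) partitions of `n` -/
def partitionCount (n : ℕ) : ℕ := Fintype.card (Nat.Partition n)

/-- the overpartition function: an overpartition is equivalent to a pair consisting of a
partition into distinct parts (the overlined parts) and an arbitrary partition. -/
def overpartitionCount (n : ℕ) : ℕ :=
  ∑ x ∈ Finset.HasAntidiagonal.antidiagonal n,
    (Nat.Partition.distincts x.1).card * partitionCount x.2

/-- the overpartition function extended by `0` on negative integers -/
def pbar (m : ℤ) : ℤ := if 0 ≤ m then overpartitionCount m.toNat else 0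

/-!
Gauss's identity `∑_{k ∈ ℤ} (-1)^k q^(k²) = (q; q)_∞ / (-q; q)_∞` says that the theta series
`1 + 2 ∑_{j ≥ 1} (-1)^j q^(j²)` is the reciprocal of the overpartition generating function
`(-q; q)_∞ / (q; q)_∞`. Comparing coefficients gives `p̄(n) = 2 ∑_{j ≥ 1} (-1)^(j+1) p̄(n - j²)`
for `n ≥ 1`, so `p̄(n) - 2 p̄(n-1) + 2 p̄(n-4) = 2 (p̄(n-9) - p̄(n-16) + p̄(n-25) - ⋯)`, an
alternating sum of a non-increasing sequence of non-negative numbers (`p̄` is monotone).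

Modulo `X^(2N+1)` all infinite products may be replaced by finite ones. Gauss's identity then
follows from its finite form `∑_{|k| ≤ N} (-1)^k q^(k²) [2N, N+k]_{q²} = (q; q²)_N²`, an instance
of the Cauchy binomial theorem, because `[2N, N+k]_{q²} (q²; q²)_N ≡ 1` to the required order.
-/

open Finset

section GaussBinom

variable {R : Type*}

def gaussBinom [Semiring R] (t : R) : ℕ → ℕ → R
  | _, 0 => 1
  | 0, _ + 1 => 0
  | m + 1, r + 1 => gaussBinom t m (r + 1) + t ^ (m - r) * gaussBinom t m r

section Semiring
variable [Semiring R] (t : R)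

@[simp] lemma gaussBinom_zero_right (m : ℕ) : gaussBinom t m 0 = 1 := by cases m <;> rfl

lemma gaussBinom_succ_succ (m r : ℕ) :
    gaussBinom t (m + 1) (r + 1) = gaussBinom t m (r + 1) + t ^ (m - r) * gaussBinom t m r := rfl

lemma gaussBinom_eq_zero_of_lt {m r : ℕ} (h : m < r) : gaussBinom t m r = 0 := by
  induction m generalizing r with
  | zero => obtain ⟨r, rfl⟩ := Nat.exists_eq_add_one_of_ne_zero (by omega : r ≠ 0); rfl
  | succ m ih =>
    obtain ⟨r, rfl⟩ := Nat.exists_eq_add_one_of_ne_zero (by omega : r ≠ 0)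
    rw [gaussBinom_succ_succ, ih (by omega), ih (by omega), mul_zero, add_zero]

end Semiring

/-- The Cauchy binomial theorem. -/
theorem prod_add_mul_pow_eq_sum_gaussBinom [CommSemiring R] (t y z : R) (m : ℕ) :
    ∏ i ∈ range m, (z + y * t ^ i) =
      ∑ p ∈ antidiagonal m, t ^ p.1.choose 2 * gaussBinom t m p.1 * y ^ p.1 * z ^ p.2 := by
  induction m with
  | zero => simp
  | succ m ih =>
    have z_terms : ∑ p ∈ antidiagonal (m + 1),
        t ^ p.1.choose 2 * gaussBinom t m p.1 * y ^ p.1 * z ^ p.2 =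
          z * ∑ p ∈ antidiagonal m, t ^ p.1.choose 2 * gaussBinom t m p.1 * y ^ p.1 * z ^ p.2 := by
      rw [Nat.sum_antidiagonal_succ', gaussBinom_eq_zero_of_lt t (lt_add_one m), mul_sum]
      simp only [mul_zero, zero_mul, zero_add, pow_succ]
      exact sum_congr rfl fun _ _ ↦ by ring
    have pascal : ∀ p ∈ antidiagonal m,
        t ^ (p.1 + 1).choose 2 * gaussBinom t (m + 1) (p.1 + 1) * y ^ (p.1 + 1) * z ^ p.2 =
          t ^ (p.1 + 1).choose 2 * gaussBinom t m (p.1 + 1) * y ^ (p.1 + 1) * z ^ p.2 +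
            y * t ^ m * (t ^ p.1.choose 2 * gaussBinom t m p.1 * y ^ p.1 * z ^ p.2) := by
      rintro ⟨r, s⟩ hp
      rw [HasAntidiagonal.mem_antidiagonal] at hp
      subst hp
      rw [gaussBinom_succ_succ, Nat.add_sub_cancel_left, Nat.choose_succ_succ',
        Nat.choose_one_right]
      ring
    rw [prod_range_succ, ih, Nat.sum_antidiagonal_succ, sum_congr rfl pascal, sum_add_distrib,
      ← mul_sum, ← add_assoc]
    rw [Nat.sum_antidiagonal_succ] at z_terms
    simp only [pow_zero, gaussBinom_zero_right] at z_terms ⊢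
    rw [z_terms]
    ring

end GaussBinom

section qPochhammer

variable {R : Type*} [CommRing R]

def qPochhammer (a q : R) (n : ℕ) : R := ∏ i ∈ range n, (1 - a * q ^ i)

variable (a q : R)

@[simp] lemma qPochhammer_zero : qPochhammer a q 0 = 1 := prod_range_zero _

lemma qPochhammer_succ (n : ℕ) :
    qPochhammer a q (n + 1) = qPochhammer a q n * (1 - a * q ^ n) := prod_range_succ _ n

lemma qPochhammer_add (m n : ℕ) :
    qPochhammer a q (m + n) = qPochhammer a q m * qPochhammer (a * q ^ m) q n := by
  simp only [qPochhammer, prod_range_add, mul_assoc, ← pow_add]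

lemma qPochhammer_two_mul (n : ℕ) :
    qPochhammer a q (2 * n) = qPochhammer a (q ^ 2) n * qPochhammer (a * q) (q ^ 2) n := by
  induction n with
  | zero => simp
  | succ n ih =>
    rw [Nat.mul_succ, qPochhammer_succ, qPochhammer_succ, ih, qPochhammer_succ, qPochhammer_succ]
    ring

lemma qPochhammer_neg_mul_qPochhammer (n : ℕ) :
    qPochhammer (-a) q n * qPochhammer a q n = qPochhammer (a ^ 2) (q ^ 2) n := by
  simp only [qPochhammer, ← prod_mul_distrib]
  exact prod_congr rfl fun _ _ ↦ by ring

lemma qPochhammer_smodEq_one {I : Ideal R} (ha : a ∈ I) (n : ℕ) :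
    qPochhammer a q n ≡ 1 [SMOD I] := by
  rw [← prod_const_one (s := range n)]
  refine SModEq.prod fun i _ ↦ ?_
  rw [SModEq.sub_mem, sub_sub_cancel_left, neg_mem_iff]
  exact I.mul_mem_right _ ha

theorem gaussBinom_mul_qPochhammer_mul_qPochhammer (t : R) (r s : ℕ) :
    gaussBinom t (r + s) r * qPochhammer t t r * qPochhammer t t s = qPochhammer t t (r + s) := by
  induction h : r + s generalizing r s with
  | zero =>
    obtain ⟨rfl, rfl⟩ : r = 0 ∧ s = 0 := by omega
    simp
  | succ m ih =>
    rcases r with _ | r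
    · simp [← h]
    rcases s with _ | s
    · obtain rfl : m = r := by omega
      have := ih m 0 (by omega)
      simp only [qPochhammer_zero, mul_one] at this ⊢
      rw [gaussBinom_succ_succ, gaussBinom_eq_zero_of_lt t (lt_add_one m), Nat.sub_self,
        qPochhammer_succ]
      linear_combination (1 - t * t ^ m) * this
    · obtain rfl : m = r + s + 1 := by omega
      have h₁ := ih (r + 1) s (by omega)
      have h₂ := ih r (s + 1) (by omega)
      rw [gaussBinom_succ_succ, show r + s + 1 - r = s + 1 by omega]
      simp only [qPochhammer_succ] at h₁ h₂ ⊢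
      linear_combination (1 - t * t ^ s) * h₁ + t ^ (s + 1) * (1 - t * t ^ r) * h₂

lemma qPochhammer_smodEq_of_le (t : R) {k N : ℕ} (h : k ≤ N) :
    qPochhammer t t N ≡ qPochhammer t t k [SMOD Ideal.span {t ^ (k + 1)}] := by
  obtain ⟨j, rfl⟩ := Nat.exists_eq_add_of_le h
  rw [qPochhammer_add, ← pow_succ']
  simpa using (SModEq.refl (qPochhammer t t k)).mul
    (qPochhammer_smodEq_one _ t (Ideal.mem_span_singleton_self _) j)

lemma prod_range_two_mul_pow_sub (N : ℕ) :
    ∏ i ∈ range (2 * N), (q ^ (2 * N) + -q * (q ^ 2) ^ i) =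
      (-1) ^ N * q ^ (3 * N ^ 2) * qPochhammer q (q ^ 2) N ^ 2 := by
  have lower : ∀ i ∈ range N, q ^ (2 * N) + -q * (q ^ 2) ^ i =
      -(q * (q ^ 2) ^ i) * (1 - q * (q ^ 2) ^ (N - 1 - i)) := by
    intro i hi
    obtain ⟨k, rfl⟩ := Nat.exists_eq_add_of_lt (mem_range.1 hi)
    rw [show i + k + 1 - 1 - i = k by omega]
    ring
  have upper : ∀ i ∈ range N, q ^ (2 * N) + -q * (q ^ 2) ^ (N + i) =
      q ^ (2 * N) * (1 - q * (q ^ 2) ^ i) := fun i _ ↦ by ring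
  have odd_powers : ∀ n, ∏ i ∈ range n, q * (q ^ 2) ^ i = q ^ (n ^ 2) := by
    intro n
    induction n with
    | zero => simp
    | succ n ih => rw [prod_range_succ, ih]; ring
  rw [show range (2 * N) = range (N + N) by rw [two_mul], prod_range_add, prod_congr rfl lower,
    prod_congr rfl upper, prod_mul_distrib, prod_mul_distrib,
    prod_range_reflect (fun i ↦ 1 - q * (q ^ 2) ^ i), prod_neg, odd_powers, prod_const, card_range]
  simp only [qPochhammer]
  ring

end qPochhammer

lemma Finset.Nat.sum_antidiagonal_two_mul_dist {M : Type*} [AddCommMonoid M] (g : ℕ → M) (N : ℕ) :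
    ∑ p ∈ antidiagonal (2 * N), g (Nat.dist p.1 N) = g 0 + 2 • ∑ j ∈ range N, g (j + 1) := by
  rw [Nat.sum_antidiagonal_eq_sum_range_succ_mk, show (2 * N).succ = N + (N + 1) by omega,
    sum_range_add, sum_range_succ', two_nsmul, add_comm (g 0), add_assoc]
  congr 1
  · rw [← sum_range_reflect]
    refine sum_congr rfl fun j hj ↦ congrArg g ?_
    rw [mem_range] at hj
    simp only [Nat.dist]
    omega
  · simp only [Nat.dist]
    congr 1
    · exact sum_congr rfl fun j _ ↦ congrArg g (by omega)
    · exact congrArg g (by omega)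

lemma Nat.two_mul_choose_two_add_self (r : ℕ) : 2 * r.choose 2 + r = r ^ 2 := by
  induction r with
  | zero => rfl
  | succ r ih => rw [Nat.choose_succ_succ', Nat.choose_one_right]; linarith

theorem Antitone.sum_range_neg_one_pow_mul_nonneg {α : Type*} [Ring α] [PartialOrder α]
    [IsOrderedRing α] {g : ℕ → α} (hg : Antitone g) (hg₀ : ∀ i, 0 ≤ g i) (m : ℕ) :
    0 ≤ ∑ i ∈ range m, (-1) ^ i * g i := by
  suffices ∀ g : ℕ → α, Antitone g → (∀ i, 0 ≤ g i) →
      0 ≤ ∑ i ∈ range m, (-1) ^ i * g i ∧ ∑ i ∈ range m, (-1) ^ i * g i ≤ g 0 from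
    (this g hg hg₀).1
  induction m with
  | zero => exact fun g _ hg₀ ↦ by simp [hg₀ 0]
  | succ m ih =>
    intro g hg hg₀
    obtain ⟨lower, upper⟩ := ih (fun i ↦ g (i + 1)) (hg.comp_monotone fun _ _ h ↦ by omega)
      (fun i ↦ hg₀ (i + 1))
    have hsum : ∑ i ∈ range (m + 1), (-1) ^ i * g i =
        g 0 - ∑ i ∈ range m, (-1) ^ i * g (i + 1) := by
      simp only [sum_range_succ', pow_succ, mul_neg_one, neg_mul, sum_neg_distrib, pow_zero,
        one_mul]
      abel
    rw [hsum]
    exact ⟨sub_nonneg.2 (upper.trans (hg (Nat.zero_le 1))), sub_le_self _ lower⟩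

namespace PowerSeries

variable {R : Type*} [CommRing R]

lemma smodEq_span_X_pow_iff {f g : R⟦X⟧} {n : ℕ} :
    f ≡ g [SMOD Ideal.span {X ^ n}] ↔ ∀ m < n, coeff m f = coeff m g := by
  simp only [SModEq.sub_mem, Ideal.mem_span_singleton, X_pow_dvd_iff, map_sub, sub_eq_zero]

lemma isUnit_qPochhammer {a : R⟦X⟧} (ha : constantCoeff a = 0) (q : R⟦X⟧) (n : ℕ) :
    IsUnit (qPochhammer a q n) := by
  simp [isUnit_iff_constantCoeff, qPochhammer, ha]

variable {t : R⟦X⟧} (ht : constantCoeff t = 0)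
include ht

lemma gaussBinom_mul_qPochhammer_left (r s : ℕ) :
    gaussBinom t (r + s) r * qPochhammer t t r = qPochhammer (t ^ (s + 1)) t r := by
  refine (isUnit_qPochhammer ht t s).mul_right_cancel ?_
  rw [gaussBinom_mul_qPochhammer_mul_qPochhammer, add_comm r, qPochhammer_add, mul_comm,
    ← pow_succ']

lemma gaussBinom_mul_qPochhammer_right (r s : ℕ) :
    gaussBinom t (r + s) r * qPochhammer t t s = qPochhammer (t ^ (r + 1)) t s := by
  refine (isUnit_qPochhammer ht t r).mul_right_cancel ?_
  rw [mul_right_comm, gaussBinom_mul_qPochhammer_mul_qPochhammer, qPochhammer_add, mul_comm,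
    ← pow_succ']

lemma gaussBinom_mul_qPochhammer_smodEq_one {r s N : ℕ} (h : min r s ≤ N) :
    gaussBinom t (r + s) r * qPochhammer t t N ≡ 1 [SMOD Ideal.span {t ^ (min r s + 1)}] := by
  rcases le_total r s with hrs | hrs
  · rw [min_eq_left hrs] at h ⊢
    calc gaussBinom t (r + s) r * qPochhammer t t N
        ≡ gaussBinom t (r + s) r * qPochhammer t t r [SMOD _] :=
          (SModEq.refl _).mul (qPochhammer_smodEq_of_le t h)
      _ = qPochhammer (t ^ (s + 1)) t r := gaussBinom_mul_qPochhammer_left ht r s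
      _ ≡ 1 [SMOD Ideal.span {t ^ (r + 1)}] := qPochhammer_smodEq_one _ _
          (Ideal.mem_span_singleton.2 (pow_dvd_pow t (by omega))) r
  · rw [min_eq_right hrs] at h ⊢
    calc gaussBinom t (r + s) r * qPochhammer t t N
        ≡ gaussBinom t (r + s) r * qPochhammer t t s [SMOD _] :=
          (SModEq.refl _).mul (qPochhammer_smodEq_of_le t h)
      _ = qPochhammer (t ^ (r + 1)) t s := gaussBinom_mul_qPochhammer_right ht r s
      _ ≡ 1 [SMOD Ideal.span {t ^ (s + 1)}] := qPochhammer_smodEq_one _ _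
          (Ideal.mem_span_singleton.2 (pow_dvd_pow t (by omega))) s

omit ht

theorem sum_antidiagonal_gaussBinom (N : ℕ) :
    ∑ p ∈ antidiagonal (2 * N),
        (-1) ^ Nat.dist p.1 N * X ^ (Nat.dist p.1 N ^ 2) * gaussBinom (X ^ 2 : R⟦X⟧) (2 * N) p.1 =
      qPochhammer X (X ^ 2) N ^ 2 := by
  have cauchy := prod_add_mul_pow_eq_sum_gaussBinom (X ^ 2 : R⟦X⟧) (-X) (X ^ (2 * N)) (2 * N)
  have term : ∀ p ∈ antidiagonal (2 * N),
      (X ^ 2 : R⟦X⟧) ^ p.1.choose 2 * gaussBinom (X ^ 2) (2 * N) p.1 * (-X) ^ p.1 *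
          (X ^ (2 * N)) ^ p.2 =
        (-1) ^ N * X ^ (3 * N ^ 2) *
          ((-1) ^ Nat.dist p.1 N * X ^ (Nat.dist p.1 N ^ 2) * gaussBinom (X ^ 2) (2 * N) p.1) := by
    rintro ⟨r, s⟩ hp
    rw [HasAntidiagonal.mem_antidiagonal] at hp
    have hsign : N + Nat.dist r N = r + 2 * (N - r) := by unfold Nat.dist; omega
    have hexp : 2 * r.choose 2 + r + 2 * N * s = 3 * N ^ 2 + Nat.dist r N ^ 2 := by
      rw [Nat.two_mul_choose_two_add_self]
      rcases le_total r N with h | h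
      · obtain ⟨d, rfl⟩ := Nat.exists_eq_add_of_le h
        rw [Nat.dist_eq_sub_of_le h, show s = r + 2 * d by omega, Nat.add_sub_cancel_left]
        ring
      · obtain ⟨d, rfl⟩ := Nat.exists_eq_add_of_le h
        rw [Nat.dist_eq_sub_of_le_right h, Nat.add_sub_cancel_left]
        obtain rfl : N = s + d := by omega
        ring
    calc (X ^ 2 : R⟦X⟧) ^ r.choose 2 * gaussBinom (X ^ 2) (2 * N) r * (-X) ^ r *
          (X ^ (2 * N)) ^ s
        = (-1) ^ r * X ^ (2 * r.choose 2 + r + 2 * N * s) * gaussBinom (X ^ 2) (2 * N) r := by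
          ring
      _ = (-1) ^ (N + Nat.dist r N) * X ^ (3 * N ^ 2 + Nat.dist r N ^ 2) *
          gaussBinom (X ^ 2) (2 * N) r := by
          rw [hexp, hsign, pow_add _ r, pow_mul, neg_one_sq, one_pow, mul_one]
      _ = _ := by ring
  rw [prod_range_two_mul_pow_sub, sum_congr rfl term, ← mul_sum] at cauchy
  exact (isUnit_neg_one.pow N).mul_left_cancel
    (X_pow_mul_cancel (k := 3 * N ^ 2) (by linear_combination -cauchy))

noncomputable def thetaTrunc (N : ℕ) : R⟦X⟧ :=
  1 + 2 * ∑ j ∈ range N, (-1) ^ (j + 1) * X ^ ((j + 1) ^ 2)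

theorem thetaTrunc_smodEq (N : ℕ) :
    thetaTrunc N ≡ qPochhammer X (X ^ 2) N ^ 2 * qPochhammer (X ^ 2) (X ^ 2) N
      [SMOD Ideal.span {(X : R⟦X⟧) ^ (2 * N + 1)}] := by
  have htheta : thetaTrunc N =
      ∑ p ∈ antidiagonal (2 * N), (-1) ^ Nat.dist p.1 N * (X : R⟦X⟧) ^ (Nat.dist p.1 N ^ 2) := by
    rw [Nat.sum_antidiagonal_two_mul_dist (fun d ↦ (-1 : R⟦X⟧) ^ d * X ^ (d ^ 2)), thetaTrunc,
      nsmul_eq_mul]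
    simp
  rw [htheta, ← sum_antidiagonal_gaussBinom, sum_mul]
  refine SModEq.sum fun p hp ↦ ?_
  rw [HasAntidiagonal.mem_antidiagonal] at hp
  have key := gaussBinom_mul_qPochhammer_smodEq_one (t := (X ^ 2 : R⟦X⟧)) (by simp)
    (r := p.1) (s := p.2) (N := N) (by omega)
  rw [hp, SModEq.sub_mem, Ideal.mem_span_singleton, ← pow_mul] at key
  have hd : Nat.dist p.1 N + min p.1 p.2 = N := by unfold Nat.dist; omega
  rw [SModEq.sub_mem, Ideal.mem_span_singleton, show ∀ a b c e : R⟦X⟧,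
    a * b - a * b * c * e = -(a * (b * (c * e - 1))) from fun _ _ _ _ ↦ by ring, dvd_neg]
  -- `d² + 2 (min p.1 p.2 + 1) = (d - 1)² + 2N + 1` for `d = Nat.dist p.1 N`
  have bound : 2 * N + 1 ≤ Nat.dist p.1 N ^ 2 + 2 * (min p.1 p.2 + 1) := by nlinarith
  refine Dvd.dvd.mul_left ((pow_dvd_pow _ bound).trans ?_) _
  rw [pow_add]
  exact mul_dvd_mul_left _ key

theorem qPochhammer_neg_X_mul_smodEq_one (N : ℕ) :
    qPochhammer (-X : R⟦X⟧) X (2 * N) * qPochhammer X (X ^ 2) N ≡ 1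
      [SMOD Ideal.span {(X : R⟦X⟧) ^ (2 * N + 1)}] := by
  have euler : qPochhammer (-X : R⟦X⟧) X (2 * N) * qPochhammer X (X ^ 2) N =
      qPochhammer (X ^ 2 * (X ^ 2) ^ N) (X ^ 2) N := by
    refine (isUnit_qPochhammer (R := R) (a := X ^ 2) (by simp) (X ^ 2) N).mul_right_cancel ?_
    have h₁ := qPochhammer_neg_mul_qPochhammer (X : R⟦X⟧) X (2 * N)
    have h₂ := qPochhammer_two_mul (X : R⟦X⟧) X N
    have h₃ := qPochhammer_add (X ^ 2 : R⟦X⟧) (X ^ 2) N N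
    rw [← sq] at h₂
    rw [← two_mul] at h₃
    linear_combination h₁ - qPochhammer (-X) X (2 * N) * h₂ + h₃
  rw [euler]
  refine qPochhammer_smodEq_one _ _ (Ideal.mem_span_singleton.2 ?_) N
  rw [← pow_mul, ← pow_add]
  exact pow_dvd_pow X (by omega)

end PowerSeries

section GeneratingFunctions

open PowerSeries
open scoped PowerSeries.WithPiTopology

theorem HasProd.smodEq_prod_range {R : Type*} [CommRing R] [TopologicalSpace R] [T2Space R]
    {f : ℕ → R⟦X⟧} {a : R⟦X⟧} (hf : HasProd f a)
    (h : ∀ i, f i ≡ 1 [SMOD Ideal.span {X ^ (i + 1)}]) (K : ℕ) :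
    a ≡ ∏ i ∈ range K, f i [SMOD Ideal.span {X ^ (K + 1)}] := by
  have tail : ∀ s ⊇ range K, ∏ i ∈ s, f i ≡ ∏ i ∈ range K, f i [SMOD Ideal.span {X ^ (K + 1)}] := by
    intro s hs
    rw [← prod_sdiff hs]
    conv_rhs => rw [← one_mul (∏ i ∈ range K, f i), ← prod_const_one (s := s \ range K)]
    refine (SModEq.prod fun i hi ↦ (h i).mono ?_).mul (SModEq.refl _)
    rw [Ideal.span_singleton_le_span_singleton]
    exact pow_dvd_pow X (by simp only [mem_sdiff, mem_range] at hi; omega)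
  rw [smodEq_span_X_pow_iff]
  intro m hm
  rw [HasProd, WithPiTopology.tendsto_iff_coeff_tendsto] at hf
  exact tendsto_nhds_unique (hf m) (tendsto_atTop_of_eventually_const fun s hs ↦
    smodEq_span_X_pow_iff.1 (tail s hs) m hm)

theorem Nat.Partition.hasProd_powerSeriesMk_card_distincts (R : Type*) [CommSemiring R]
    [TopologicalSpace R] [T2Space R] :
    HasProd (fun i ↦ (1 + X ^ (i + 1) : R⟦X⟧))
      (PowerSeries.mk fun n ↦ (#(Nat.Partition.distincts n) : R)) := by
  have h := Nat.Partition.hasProd_powerSeriesMk_card_countRestricted R two_pos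
  simp only [Nat.Partition.countRestricted_two, show range 2 = {0, 1} by rfl] at h
  simpa [add_comm] using h

theorem Nat.Partition.hasProd_powerSeriesMk_card (R : Type*) [CommSemiring R]
    [TopologicalSpace R] [T2Space R] [IsTopologicalSemiring R] :
    HasProd (fun i ↦ ∑' j : ℕ, (X : R⟦X⟧) ^ ((i + 1) * j))
      (PowerSeries.mk fun n ↦ (Fintype.card n.Partition : R)) := by
  simpa [Nat.Partition.restricted] using
    Nat.Partition.hasProd_powerSeriesMk_card_restricted R (fun _ ↦ True)

end GeneratingFunctions

section Overpartitions

open PowerSeries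
open scoped PowerSeries.WithPiTopology

lemma mk_partitionCount_mul_qPochhammer_smodEq_one (K : ℕ) :
    PowerSeries.mk (fun n ↦ (partitionCount n : ℤ)) * qPochhammer X X K ≡ 1
      [SMOD Ideal.span {X ^ (K + 1)}] := by
  have geom_mul (i : ℕ) : (∑' j : ℕ, (X : ℤ⟦X⟧) ^ ((i + 1) * j)) * (1 - X * X ^ i) = 1 := by
    simp only [pow_mul, ← pow_succ']
    exact WithPiTopology.tsum_pow_mul_one_sub_of_constantCoeff_eq_zero (by simp)
  have geom_smodEq (i : ℕ) :
      ∑' j : ℕ, (X : ℤ⟦X⟧) ^ ((i + 1) * j) ≡ 1 [SMOD Ideal.span {X ^ (i + 1)}] := by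
    rw [SModEq.sub_mem, Ideal.mem_span_singleton]
    exact ⟨_, by linear_combination geom_mul i⟩
  calc PowerSeries.mk (fun n ↦ (partitionCount n : ℤ)) * qPochhammer X X K
      ≡ (∏ i ∈ range K, ∑' j : ℕ, (X : ℤ⟦X⟧) ^ ((i + 1) * j)) * qPochhammer X X K
        [SMOD Ideal.span {(X : ℤ⟦X⟧) ^ (K + 1)}] :=
        ((Nat.Partition.hasProd_powerSeriesMk_card ℤ).smodEq_prod_range geom_smodEq K).mul
          (SModEq.refl _)
    _ = 1 := by rw [qPochhammer, ← prod_mul_distrib, prod_eq_one fun i _ ↦ geom_mul i]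

lemma mk_card_distincts_smodEq_qPochhammer (K : ℕ) :
    PowerSeries.mk (fun n ↦ (#(Nat.Partition.distincts n) : ℤ)) ≡ qPochhammer (-X) X K
      [SMOD Ideal.span {X ^ (K + 1)}] := by
  have h := (Nat.Partition.hasProd_powerSeriesMk_card_distincts ℤ).smodEq_prod_range
    (fun i ↦ by simp [SModEq.sub_mem]) K
  convert h using 2
  exact prod_congr rfl fun i _ ↦ by ring

noncomputable def overpartitionSeries : ℤ⟦X⟧ := PowerSeries.mk fun n ↦ (overpartitionCount n : ℤ)

lemma overpartitionSeries_eq_mul :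
    overpartitionSeries = PowerSeries.mk (fun n ↦ (#(Nat.Partition.distincts n) : ℤ)) *
      PowerSeries.mk (fun n ↦ (partitionCount n : ℤ)) := by
  ext n
  simp [overpartitionSeries, overpartitionCount, coeff_mul]

theorem thetaTrunc_mul_overpartitionSeries_smodEq_one (N : ℕ) :
    thetaTrunc N * overpartitionSeries ≡ 1 [SMOD Ideal.span {X ^ (2 * N + 1)}] := by
  have hθ := thetaTrunc_smodEq (R := ℤ) N
  have hA := mk_card_distincts_smodEq_qPochhammer (2 * N)
  have hP := mk_partitionCount_mul_qPochhammer_smodEq_one (2 * N)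
  have hE := qPochhammer_neg_X_mul_smodEq_one (R := ℤ) N
  have split : qPochhammer (X : ℤ⟦X⟧) X (2 * N) =
      qPochhammer X (X ^ 2) N * qPochhammer (X ^ 2) (X ^ 2) N := by
    rw [qPochhammer_two_mul, ← sq]
  rw [overpartitionSeries_eq_mul]
  calc thetaTrunc N * (PowerSeries.mk (fun n ↦ (#(Nat.Partition.distincts n) : ℤ)) *
        PowerSeries.mk (fun n ↦ (partitionCount n : ℤ)))
      ≡ qPochhammer X (X ^ 2) N ^ 2 * qPochhammer (X ^ 2) (X ^ 2) N *
          (qPochhammer (-X) X (2 * N) * PowerSeries.mk (fun n ↦ (partitionCount n : ℤ)))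
          [SMOD Ideal.span {(X : ℤ⟦X⟧) ^ (2 * N + 1)}] := hθ.mul (hA.mul (SModEq.refl _))
    _ = (qPochhammer (-X) X (2 * N) * qPochhammer X (X ^ 2) N) *
          (PowerSeries.mk (fun n ↦ (partitionCount n : ℤ)) * qPochhammer X X (2 * N)) := by
        rw [split]
        ring
    _ ≡ 1 * 1 [SMOD Ideal.span {(X : ℤ⟦X⟧) ^ (2 * N + 1)}] := hE.mul hP
    _ = 1 := one_mul 1

lemma coeff_X_pow_mul_overpartitionSeries (n k : ℕ) :
    coeff n (X ^ k * overpartitionSeries) = pbar (n - k) := by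
  rw [coeff_X_pow_mul', pbar]
  split_ifs with h₁ h₂ h₂
  · simp [overpartitionSeries, show ((n : ℤ) - k).toNat = n - k by omega]
  · omega
  · omega
  · rfl

theorem overpartitionCount_eq_two_mul_sum {n N : ℕ} (hn : 1 ≤ n) (hN : n ≤ 2 * N) :
    (overpartitionCount n : ℤ) = 2 * ∑ j ∈ range N, (-1) ^ j * pbar (n - (j + 1) ^ 2) := by
  have h := smodEq_span_X_pow_iff.1 (thetaTrunc_mul_overpartitionSeries_smodEq_one N) n (by omega)
  have hC : ∀ j, (-1 : ℤ⟦X⟧) ^ j = C ((-1) ^ j) := fun j ↦ by simp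
  have h2 : (2 : ℤ⟦X⟧) = C 2 := by simp
  simp only [thetaTrunc, add_mul, one_mul, mul_assoc, sum_mul, mul_sum, hC, h2, map_add, map_sum,
    coeff_C_mul, coeff_X_pow_mul_overpartitionSeries, coeff_one, if_neg (by omega : n ≠ 0),
    pow_succ (-1 : ℤ), neg_mul, mul_neg, sum_neg_distrib] at h
  simp only [overpartitionSeries, coeff_mk] at h
  push_cast at h
  rw [mul_sum]
  linear_combination h

lemma partitionCount_le_succ (m : ℕ) : partitionCount m ≤ partitionCount (m + 1) := by
  have e := Nat.Partition.partitionWithPartEquiv (n := m + 1) le_rfl (by omega)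
  exact (Fintype.card_congr e).symm.trans_le (Fintype.card_subtype_le _)

lemma overpartitionCount_le_succ (m : ℕ) : overpartitionCount m ≤ overpartitionCount (m + 1) := by
  rw [overpartitionCount, overpartitionCount, Finset.Nat.sum_antidiagonal_succ']
  exact le_add_left (sum_le_sum fun p _ ↦ Nat.mul_le_mul_left _ (partitionCount_le_succ p.2))

lemma pbar_mono : Monotone pbar := by
  intro a b hab
  have hmono := monotone_nat_of_le_succ overpartitionCount_le_succ
  unfold pbar
  split_ifs with ha hb hb
  · exact_mod_cast hmono (by omega)
  · omega
  · positivity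
  · rfl

lemma pbar_nonneg (m : ℤ) : 0 ≤ pbar m := by
  unfold pbar
  split_ifs <;> positivity

end Overpartitions

theorem overpartition_ineq_k2 (n : ℕ) (hn : 1 ≤ n) :
    0 ≤ pbar n - 2 * pbar ((n : ℤ) - 1) + 2 * pbar ((n : ℤ) - 4) := by
  have recursion := overpartitionCount_eq_two_mul_sum (N := n + 2) hn (by omega)
  rw [sum_range_succ', sum_range_succ'] at recursion
  norm_num at recursion
  have tail : 0 ≤ ∑ j ∈ range n, (-1) ^ (j + 1 + 1) * pbar (n - ((j : ℤ) + 1 + 1 + 1) ^ 2) := by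
    simp only [pow_succ (-1 : ℤ), mul_neg_one, neg_neg]
    exact Antitone.sum_range_neg_one_pow_mul_nonneg (fun i j hij ↦ pbar_mono (by gcongr))
      (fun _ ↦ pbar_nonneg _) n
  have pbar_n : pbar n = overpartitionCount n := by simp [pbar]
  linarith
end
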